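/- arXiv:2009.03483 — 4 statements merged into one kernel-verified Lean document; each statement's English description precedes it below -/
import Mathlib

section
/- For every positive integer j, the infinite product over all positive integers k ≠ j of (1 - j²/k²) equals (-1)^{j+1}/2. -/
/-!
Since `1 - j²/k² = (k - j)(k + j)/k²`, every partial product is a ratio of factorials. The factors
with `k < j` multiply to `(-1)^(j+1) (2j)! / (2 (j!)²)`, and the factors with `j < k ≤ j + m` to
`(j!)² / (2j)!` times `m! (2j+m)! / ((j+m)!)²`. The last ratio is a product of `j` quotients
`(j+m+1+i)/(m+1+i)`, each tending to `1`, so the partial products tend to `(-1)^(j+1)/2`.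
-/

open Filter Finset Topology
open scoped Nat

lemma multipliable_mulIndicator_one_sub_sq_div_sq (x : ℝ) (s : Set ℕ) :
    Multipliable (s.mulIndicator fun k : ℕ => 1 - x ^ 2 / (k : ℝ) ^ 2) := by
  have hsum : Summable (s.indicator fun k : ℕ => -(x ^ 2 / (k : ℝ) ^ 2)) := by
    simpa only [div_eq_mul_inv] using
      ((Real.summable_nat_pow_inv.mpr one_lt_two).mul_left (x ^ 2)).neg.indicator s
  convert Real.multipliable_one_add_of_summable hsum using 1
  ext k
  by_cases hk : k ∈ s <;> simp [hk, sub_eq_add_neg]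

lemma prod_range_mulIndicator_eq_prod_Ico_mul {M : Type*} [CommMonoid M] (f : ℕ → M)
    (j m : ℕ) :
    ∏ k ∈ range (j + 1 + m), {k | 1 ≤ k ∧ k ≠ j}.mulIndicator f k =
      (∏ k ∈ Ico 1 j, f k) * ∏ i ∈ range m, f (j + 1 + i) := by
  classical
  rw [prod_range_add]
  congr 1
  · simp_rw [Set.mulIndicator_apply, ← prod_filter]
    congr 1
    ext k
    simp only [mem_filter, mem_range, mem_Ico, Set.mem_ofPred_eq]
    omega
  · exact prod_congr rfl fun i _ =>
      Set.mulIndicator_of_mem (s := {k | 1 ≤ k ∧ k ≠ j}) ⟨by omega, by omega⟩ f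

lemma prod_Ico_one_sub_sq_div_sq {j : ℕ} (hj : 1 ≤ j) :
    ∏ k ∈ Ico 1 j, (1 - (j : ℝ) ^ 2 / (k : ℝ) ^ 2) =
      (-1) ^ (j + 1) * (2 * j)! / (2 * (j ! : ℝ) ^ 2) := by
  obtain ⟨p, rfl⟩ := Nat.exists_eq_add_of_le' hj
  have hfactor : ∀ i ∈ range p, 1 - ((p + 1 : ℕ) : ℝ) ^ 2 / ((1 + i : ℕ) : ℝ) ^ 2 =
      -1 * (((p - i : ℕ) : ℝ) * ((p + 2 + i : ℕ) : ℝ)) / ((i + 1 : ℕ) : ℝ) ^ 2 := by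
    intro i hi
    rw [Nat.cast_sub (mem_range.mp hi).le]
    push_cast
    field_simp
    ring
  rw [prod_Ico_eq_prod_range, Nat.add_sub_cancel, prod_congr rfl hfactor, prod_div_distrib,
    prod_mul_distrib, prod_mul_distrib, prod_const, card_range, prod_pow, ← Nat.cast_prod,
    ← Nat.cast_prod, ← Nat.cast_prod, ← Nat.descFactorial_eq_prod_range, Nat.descFactorial_self,
    ← Nat.ascFactorial_eq_prod_range, prod_range_add_one_eq_factorial]
  have hasc : ((p + 1)! : ℝ) * (p + 2).ascFactorial p = (2 * p + 1)! := by
    exact_mod_cast (Nat.factorial_mul_ascFactorial (p + 1) p).trans (by ring_nf)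
  rw [show 2 * (p + 1) = 2 * p + 1 + 1 by ring, Nat.factorial_succ (2 * p + 1), Nat.cast_mul,
    ← hasc, Nat.factorial_succ p]
  push_cast
  field_simp
  ring

lemma prod_range_one_sub_sq_div_add_sq (j m : ℕ) :
    ∏ i ∈ range m, (1 - (j : ℝ) ^ 2 / ((j + 1 + i : ℕ) : ℝ) ^ 2) =
      (j ! : ℝ) ^ 2 / (2 * j)! * (m ! * (2 * j + m)! / ((j + m)! : ℝ) ^ 2) := by
  induction m with
  | zero =>
    rw [prod_range_zero, Nat.factorial_zero, Nat.cast_one, one_mul, add_zero, add_zero]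
    field_simp
  | succ m ih =>
    rw [prod_range_succ, ih, Nat.factorial_succ m, ← add_assoc, Nat.factorial_succ (2 * j + m),
      ← add_assoc, Nat.factorial_succ (j + m)]
    push_cast
    field_simp
    ring

lemma tendsto_factorial_mul_factorial_div_sq (j : ℕ) :
    Tendsto (fun m : ℕ => m ! * (2 * j + m)! / ((j + m)! : ℝ) ^ 2) atTop (𝓝 1) := by
  have hratio : ∀ m : ℕ, m ! * (2 * j + m)! / ((j + m)! : ℝ) ^ 2 =
      ∏ i ∈ range j, (1 + j / ((m + (i + 1) : ℕ) : ℝ)) := by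
    intro m
    have hterm : ∀ i ∈ range j, 1 + (j : ℝ) / ((m + (i + 1) : ℕ) : ℝ) =
        ((j + m + 1 + i : ℕ) : ℝ) / ((m + 1 + i : ℕ) : ℝ) := by
      intro i _
      push_cast
      field_simp
      ring
    have hnum : ((j + m)! : ℝ) * (j + m + 1).ascFactorial j = (2 * j + m)! := by
      exact_mod_cast (Nat.factorial_mul_ascFactorial (j + m) j).trans (by ring_nf)
    have hden : (m ! : ℝ) * (m + 1).ascFactorial j = (j + m)! := by
      exact_mod_cast (Nat.factorial_mul_ascFactorial m j).trans (by rw [add_comm])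
    rw [prod_congr rfl hterm, prod_div_distrib, ← Nat.cast_prod, ← Nat.cast_prod,
      ← Nat.ascFactorial_eq_prod_range, ← Nat.ascFactorial_eq_prod_range, ← hnum, ← hden]
    field_simp
  simp_rw [hratio]
  rw [← prod_const_one (s := range j)]
  refine tendsto_finsetProd _ fun i _ => ?_
  simpa using tendsto_const_nhds.add
    ((tendsto_const_div_atTop_nhds_zero_nat (j : ℝ)).comp (tendsto_add_atTop_nat (i + 1)))

/-- For every positive integer `j`,
`∏_{k ≥ 1, k ≠ j} (1 - j²/k²) = (-1)^(j+1)/2`. -/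
theorem stmt1 (j : ℕ) (hj : 1 ≤ j) :
    (∏' k : {k : ℕ // 1 ≤ k ∧ k ≠ j}, (1 - (j : ℝ) ^ 2 / ((k : ℕ) : ℝ) ^ 2)) =
      (-1 : ℝ) ^ (j + 1) / 2 := by
  set S : Set ℕ := {k | 1 ≤ k ∧ k ≠ j}
  set f : ℕ → ℝ := fun k => 1 - (j : ℝ) ^ 2 / (k : ℝ) ^ 2
  have hpartial : Tendsto (fun m => ∏ k ∈ range (j + 1 + m), S.mulIndicator f k) atTop
      (𝓝 ((-1) ^ (j + 1) / 2)) := by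
    simp_rw [S, prod_range_mulIndicator_eq_prod_Ico_mul, f, prod_Ico_one_sub_sq_div_sq hj,
      prod_range_one_sub_sq_div_add_sq]
    convert ((tendsto_factorial_mul_factorial_div_sq j).const_mul _).const_mul _ using 2
    field_simp
  have hprod := (multipliable_mulIndicator_one_sub_sq_div_sq j S).hasProd.tendsto_prod_nat.comp
    ((tendsto_add_atTop_nat (j + 1)).congr fun m => add_comm m (j + 1))
  exact (tprod_subtype S f).trans (tendsto_nhds_unique hprod hpartial)
end

section
/- Consequently, for every positive integer j, the infinite product over all positive integers k ≠ j of (1 - j²/k²)^{-1} equals 2·(-1)^{j+1}. -/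
/-!
For `k ≠ j` the factor is `k² / ((k - j)(k + j))`, so for `n ≥ j` the partial product over
`1 ≤ k ≤ n` collapses into factorials: it equals `2 (-1)^(j+1) n^{(j)} / (n + j)^{(j)}`, with
`m^{(j)}` the falling factorial. The quotient of falling factorials tends to `1`, and the product
converges because its factors are `1 + O(1/k²)`.
-/

open Finset Filter Topology Asymptotics Nat

lemma abs_inv_one_sub_sub_one_le {x : ℝ} (hx₀ : 0 ≤ x) (hx : x ≤ 1 / 2) :
    |(1 - x)⁻¹ - 1| ≤ 2 * x := by
  have h : (1 - x)⁻¹ - 1 = x / (1 - x) := by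
    field_simp [show 1 - x ≠ 0 by linarith]
    ring
  rw [h, abs_of_nonneg (div_nonneg hx₀ (by linarith)), div_le_iff₀ (by linarith)]
  nlinarith

lemma tendsto_descFactorial_div_descFactorial_add (k a : ℕ) :
    Tendsto (fun n : ℕ => (n.descFactorial k : ℝ) / (n + a).descFactorial k) atTop (𝓝 1) := by
  have hshift : (fun n : ℕ => (n : ℝ)) ~[atTop] fun n : ℕ => ((n + a : ℕ) : ℝ) := by
    rw [isEquivalent_iff_tendsto_one (eventually_gt_atTop 0 |>.mono fun n hn => by positivity)]
    simpa [Pi.div_def] using tendsto_natCast_div_add_atTop (a : ℝ)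
  have hdesc := isEquivalent_descFactorial k
  have key := (hdesc.trans (hshift.pow k)).trans
    (hdesc.comp_tendsto (tendsto_add_atTop_nat a)).symm
  rwa [isEquivalent_iff_tendsto_one] at key
  filter_upwards [eventually_ge_atTop k] with n hn
  simpa using (descFactorial_pos.mpr (by omega)).ne'

noncomputable def invSineFactor (j : ℕ) : ℕ → ℝ :=
  Set.mulIndicator {k | 1 ≤ k ∧ k ≠ j} fun k => (1 - (j : ℝ) ^ 2 / (k : ℝ) ^ 2)⁻¹

section

variable {j k : ℕ}

@[simp] lemma invSineFactor_self : invSineFactor j j = 1 := by simp [invSineFactor]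

lemma invSineFactor_of_ne (hk : k ≠ 0) (hkj : k ≠ j) :
    invSineFactor j k = k ^ 2 / ((k - j) * (k + j)) := by
  have hk' : (k : ℝ) ≠ 0 := by exact_mod_cast hk
  rw [invSineFactor, Set.mulIndicator_of_mem (show k ∈ {k | 1 ≤ k ∧ k ≠ j} from ⟨by omega, hkj⟩),
    one_sub_div (by positivity), inv_div]
  ring

lemma prod_range_invSineFactor_of_lt {n : ℕ} (hn : n < j) :
    ∏ k ∈ range (n + 1), invSineFactor j k =
      (-1) ^ n * (n ! : ℝ) ^ 2 / ((j - 1).descFactorial n * (j + n).descFactorial n) := by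
  induction n with
  | zero => simp [invSineFactor]
  | succ n ih =>
    rw [prod_range_succ, ih (by omega), invSineFactor_of_ne (by omega) (by omega),
      descFactorial_succ, show j + (n + 1) = j + n + 1 by ring, succ_descFactorial_succ]
    have hd₁ : ((j - 1).descFactorial n : ℝ) ≠ 0 := by
      exact_mod_cast (descFactorial_pos.mpr (by omega)).ne'
    have hd₂ : ((j + n).descFactorial n : ℝ) ≠ 0 := by
      exact_mod_cast (descFactorial_pos.mpr (by omega)).ne'
    have hjn : ((j - 1 - n : ℕ) : ℝ) = -((n + 1 : ℝ) - j) := by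
      rw [Nat.cast_sub (by omega), Nat.cast_sub (by omega)]
      push_cast
      ring
    have hjn' : (n + 1 : ℝ) - j ≠ 0 := by
      rw [← neg_ne_zero, ← hjn]
      exact_mod_cast (show j - 1 - n ≠ 0 by omega)
    rw [Nat.cast_mul, hjn, factorial_succ]
    push_cast
    field_simp
    ring

lemma prod_range_invSineFactor_of_le (hj : 1 ≤ j) {n : ℕ} (hn : j ≤ n) :
    ∏ k ∈ range (n + 1), invSineFactor j k =
      2 * (-1) ^ (j + 1) * n.descFactorial j / (n + j).descFactorial j := by
  induction n, hn using Nat.le_induction with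
  | base =>
    obtain ⟨m, rfl⟩ : ∃ m, j = m + 1 := ⟨j - 1, by omega⟩
    rw [prod_range_succ, invSineFactor_self, mul_one, prod_range_invSineFactor_of_lt (by omega),
      add_tsub_cancel_right, descFactorial_self, descFactorial_self,
      show m + 1 + (m + 1) = m + 1 + m + 1 by ring, succ_descFactorial_succ, factorial_succ]
    have hm : (m ! : ℝ) ≠ 0 := by positivity
    have hd : ((m + 1 + m).descFactorial m : ℝ) ≠ 0 := by
      exact_mod_cast (descFactorial_pos.mpr (by omega)).ne'
    push_cast
    field_simp
    ring
  | succ n hjn ih =>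
    rw [prod_range_succ, ih, invSineFactor_of_ne (by omega) (by omega)]
    have h₁ : ((n + 1 - j : ℕ) : ℝ) * (n + 1).descFactorial j = (n + 1) * n.descFactorial j := by
      exact_mod_cast succ_descFactorial n j
    have h₂ : ((n + 1 : ℕ) : ℝ) * (n + 1 + j).descFactorial j =
        (n + 1 + j) * (n + j).descFactorial j := by
      have := succ_descFactorial (n + j) j
      rw [show n + j + 1 - j = n + 1 by omega, show n + j + 1 = n + 1 + j by omega] at this
      exact_mod_cast this
    rw [Nat.cast_sub (by omega)] at h₁
    have hjn' : (n + 1 : ℝ) - j ≠ 0 := by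
      have : (j : ℝ) ≤ n := by exact_mod_cast hjn
      linarith
    have hd : ((n + j).descFactorial j : ℝ) ≠ 0 := by
      exact_mod_cast (descFactorial_pos.mpr (by omega)).ne'
    have hd' : ((n + 1 + j).descFactorial j : ℝ) ≠ 0 := by
      exact_mod_cast (descFactorial_pos.mpr (by omega)).ne'
    push_cast at h₁ h₂ ⊢
    field_simp
    linear_combination ((n.descFactorial j : ℝ) * (n + 1)) * h₂ -
      ((n + j).descFactorial j * (n + 1 + j : ℝ)) * h₁

lemma summable_invSineFactor_sub_one : Summable fun k => invSineFactor j k - 1 := by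
  refine Summable.of_norm_bounded_eventually_nat
    ((Real.summable_nat_pow_inv.mpr one_lt_two).mul_left (2 * (j : ℝ) ^ 2)) ?_
  filter_upwards [eventually_gt_atTop (2 * j)] with k hk
  have hk' : (2 * j : ℝ) < k := by exact_mod_cast hk
  have hk₀ : (0 : ℝ) < k := by linarith [(j.cast_nonneg : (0 : ℝ) ≤ j)]
  rw [invSineFactor,
    Set.mulIndicator_of_mem (show k ∈ {k | 1 ≤ k ∧ k ≠ j} from ⟨by omega, by omega⟩),
    Real.norm_eq_abs, mul_assoc, ← div_eq_mul_inv]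
  refine abs_inv_one_sub_sub_one_le (by positivity) ?_
  rw [div_le_iff₀ (by positivity)]
  nlinarith

lemma hasProd_invSineFactor (hj : 1 ≤ j) : HasProd (invSineFactor j) (2 * (-1) ^ (j + 1)) := by
  have hmul : Multipliable (invSineFactor j) := by
    simpa using Real.multipliable_one_add_of_summable summable_invSineFactor_sub_one
  rw [hmul.hasProd_iff_tendsto_nat, ← tendsto_add_atTop_iff_nat 1]
  have hlim := (tendsto_descFactorial_div_descFactorial_add j j).const_mul (2 * (-1) ^ (j + 1))
  rw [mul_one] at hlim
  refine hlim.congr' ?_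
  filter_upwards [eventually_ge_atTop j] with n hn
  rw [prod_range_invSineFactor_of_le hj hn, mul_div_assoc]

end

/-- For every positive integer `j`,
`∏_{k ≥ 1, k ≠ j} (1 - j²/k²)⁻¹ = 2·(-1)^(j+1)`. -/
theorem stmt2 (j : ℕ) (hj : 1 ≤ j) :
    (∏' k : {k : ℕ // 1 ≤ k ∧ k ≠ j}, (1 - (j : ℝ) ^ 2 / ((k : ℕ) : ℝ) ^ 2)⁻¹) =
      2 * (-1 : ℝ) ^ (j + 1) :=
  (hasProd_subtype_iff_mulIndicator.mpr (hasProd_invSineFactor hj)).tprod_eq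
end

section
/- If j² ≠ n² + γₙ, then K(n,j) = (-1)^{j+1}·(2nj/(j² - n² - γₙ))·sinc(π√(n² + γₙ)), where K(n,j) = (n/j)·∏_{k≠j}(1 - (n² + γₙ)/k²)·∏_{k≠j}(1 - j²/k²)^{-1} and sinc(z) = sin(z)/z (with sinc(0) = 1). -/
/-!
Euler's product `∏_{k ≥ 1} (1 - w² / k²) = sin (π w) / (π w)` converges unconditionally, so
dropping its nonzero `j`-th factor gives the first product as
`sinc (π √(n² + γₙ)) / (1 - (n² + γₙ) / j²)`. For the second, put `a k = 1 - j / k` for `k ≠ j`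
and `a j = 1 / 2`; then every factor `1 - j² / k²`, `k ≠ j`, equals `a k / a (k + j)`, so the
partial product up to `N` telescopes to `∏_{k ≤ j} a k / ∏_{N < k ≤ N + j} a k`, which tends to
`∏_{k ≤ j} a k = (-1) ^ (j + 1) / 2`.
-/

open Real Complex Filter Finset Topology

theorem HasProd.subtype_ne_div {ι α : Type*} [CommGroupWithZero α] [TopologicalSpace α]
    [ContinuousMul α] {f : ι → α} {a : α} (hf : HasProd f a) {i : ι} (hi : f i ≠ 0) :
    HasProd (fun k : {k // k ≠ i} => f k) (a / f i) := by
  classical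
  rw [div_eq_mul_inv]
  refine hasProd_subtype_iff_mulIndicator (s := {k | k ≠ i}).mpr ?_
  convert hf.mul (hasProd_ite_eq i (f i)⁻¹) using 1
  funext k
  by_cases hk : k = i
  · simp [hk, hi]
  · simp [hk]

theorem hasProd_subtype_pos_ne_succ_iff {α : Type*} [CommMonoid α] [TopologicalSpace α]
    (f : ℕ → α) {a : α} (J : ℕ) :
    HasProd (fun k : {k : ℕ // 1 ≤ k ∧ k ≠ J + 1} => f k) a ↔
      HasProd (fun i : {i : ℕ // i ≠ J} => f (i + 1)) a := by
  let e : {i : ℕ // i ≠ J} ≃ {k : ℕ // 1 ≤ k ∧ k ≠ J + 1} :=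
    { toFun i := ⟨i + 1, by omega, by have := i.2; omega⟩
      invFun k := ⟨k - 1, by have := k.2; omega⟩
      left_inv i := by ext; simp
      right_inv k := by ext; have := k.2; simp; omega }
  exact e.hasProd_iff.symm

theorem Finset.prod_range_eq_div_of_mul_shift {α : Type*} [CommGroupWithZero α] {F a : ℕ → α}
    {p : ℕ} (ha : ∀ i, a i ≠ 0) (hF : ∀ i, F i * a (i + p) = a i) (N : ℕ) :
    ∏ i ∈ range N, F i = (∏ i ∈ range p, a i) / ∏ i ∈ range p, a (N + i) := by
  have hprod : ∀ M, ∏ i ∈ range p, a (M + i) ≠ 0 := fun M =>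
    prod_ne_zero_iff.mpr fun i _ => ha _
  induction N with
  | zero => simpa using (div_self (hprod 0)).symm
  | succ N ih =>
    have hshift : (∏ i ∈ range p, a (N + i)) * a (N + p) =
        a N * ∏ i ∈ range p, a (N + 1 + i) := by
      rw [← prod_range_succ (fun i => a (N + i)), prod_range_succ']
      simp only [add_zero, add_right_comm N 1, add_assoc, mul_comm]
    rw [prod_range_succ, ih, div_mul_eq_mul_div, div_eq_div_iff (hprod N) (hprod (N + 1))]
    apply mul_right_cancel₀ (ha (N + p))
    rw [mul_assoc _ (∏ i ∈ range p, a (N + i)), hshift, ← hF N]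
    ac_rfl

theorem tendsto_prod_range_of_mul_shift {α : Type*} [CommGroupWithZero α] [TopologicalSpace α]
    [ContinuousMul α] [ContinuousInv₀ α] {F a : ℕ → α} {p : ℕ} (ha : ∀ i, a i ≠ 0)
    (hF : ∀ i, F i * a (i + p) = a i) (hlim : Tendsto a atTop (𝓝 1)) :
    Tendsto (fun N => ∏ i ∈ range N, F i) atTop (𝓝 (∏ i ∈ range p, a i)) := by
  have hshift : Tendsto (fun N => ∏ i ∈ range p, a (N + i)) atTop (𝓝 1) := by
    simpa using tendsto_finsetProd (range p) fun i _ => (tendsto_add_atTop_iff_nat i).mpr hlim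
  simp_rw [prod_range_eq_div_of_mul_shift ha hF]
  have := (tendsto_const_nhds (x := ∏ i ∈ range p, a i)).div hshift one_ne_zero
  rwa [div_one] at this

theorem hasProd_one_sub_sq_div_sq (g : ℂ → ℂ) (hg0 : g 0 = 1)
    (hgval : ∀ w : ℂ, w ≠ 0 → g (w ^ 2) = sin (π * w) / (π * w)) (w : ℂ) :
    HasProd (fun i : ℕ => 1 - w ^ 2 / ((i : ℂ) + 1) ^ 2) (g (w ^ 2)) := by
  rcases eq_or_ne w 0 with rfl | hw
  · simp [hg0, hasProd_one]
  · have hterm : (fun i : ℕ => 1 - w ^ 2 / ((i : ℂ) + 1) ^ 2) = fun i => 1 + sineTerm w i := by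
      simp [sineTerm, neg_div, sub_eq_add_neg]
    rw [hgval w hw, hterm, (multipliable_sineTerm w).hasProd_iff_tendsto_nat]
    exact tendsto_euler_sin_prod' hw

theorem prod_range_one_sub_natCast_div (J : ℕ) :
    ∏ i ∈ range J, (1 - ((J + 1 : ℕ) : ℂ) / ((i : ℂ) + 1)) = (-1) ^ J := by
  have hreflect : ∏ i ∈ range J, ((i : ℂ) - J) = ∏ i ∈ range J, -((i : ℂ) + 1) := by
    rw [← prod_range_reflect]
    refine prod_congr rfl fun i hi => ?_
    rw [mem_range] at hi
    rw [Nat.cast_sub (by omega), Nat.cast_sub (by omega)]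
    push_cast
    ring
  have hden : ∏ i ∈ range J, ((i : ℂ) + 1) ≠ 0 :=
    prod_ne_zero_iff.mpr fun i _ => Nat.cast_add_one_ne_zero i
  calc ∏ i ∈ range J, (1 - ((J + 1 : ℕ) : ℂ) / ((i : ℂ) + 1))
      = (∏ i ∈ range J, ((i : ℂ) - J)) / ∏ i ∈ range J, ((i : ℂ) + 1) := by
        rw [← prod_div_distrib]
        refine prod_congr rfl fun i _ => ?_
        field_simp [Nat.cast_add_one_ne_zero i]
        push_cast
        ring
    _ = (-1) ^ J := by
        rw [hreflect, prod_neg, card_range, mul_div_assoc, div_self hden, mul_one]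

section RemovedProduct

variable (J : ℕ)

/-- The sequence `a` of the telescoping argument, at `k = i + 1`, for `j = J + 1`. -/
noncomputable def telescopingFactor (i : ℕ) : ℂ :=
  if i = J then 1 / 2 else 1 - ((J + 1 : ℕ) : ℂ) / ((i : ℂ) + 1)

theorem telescopingFactor_ne_zero (i : ℕ) : telescopingFactor J i ≠ 0 := by
  unfold telescopingFactor
  split_ifs with hi
  · norm_num
  · rw [sub_ne_zero, ne_comm, Ne, div_eq_one_iff_eq (Nat.cast_add_one_ne_zero i)]
    exact_mod_cast fun h => hi (by omega)

theorem mulIndicator_mul_telescopingFactor (i : ℕ) :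
    {i | i ≠ J}.mulIndicator (fun i : ℕ => 1 - ((J + 1 : ℕ) : ℂ) ^ 2 / ((i : ℂ) + 1) ^ 2) i *
      telescopingFactor J (i + (J + 1)) = telescopingFactor J i := by
  have hne : i + (J + 1) ≠ J := by omega
  unfold telescopingFactor
  have hi1 : (i : ℂ) + 1 ≠ 0 := Nat.cast_add_one_ne_zero i
  have hiJ : (i : ℂ) + (J + 1) + 1 ≠ 0 := by exact_mod_cast Nat.succ_ne_zero (i + (J + 1))
  by_cases hi : i = J
  · subst hi
    simp only [Set.mem_ofPred_eq, ne_eq, not_true_eq_false, not_false_eq_true,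
      Set.mulIndicator_of_notMem, one_mul, if_neg hne, if_pos]
    push_cast
    field_simp
    ring
  · simp only [Set.mem_ofPred_eq, ne_eq, hi, not_false_eq_true, Set.mulIndicator_of_mem,
      if_neg hne]
    push_cast
    field_simp
    ring

theorem tendsto_telescopingFactor : Tendsto (telescopingFactor J) atTop (𝓝 1) := by
  have h : Tendsto (fun i : ℕ => 1 - ((J + 1 : ℕ) : ℂ) / ((i + 1 : ℕ) : ℂ)) atTop (𝓝 (1 - 0)) :=
    tendsto_const_nhds.sub
      ((tendsto_add_atTop_iff_nat 1).mpr (tendsto_const_div_atTop_nhds_zero_nat _))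
  rw [sub_zero] at h
  refine h.congr' ?_
  filter_upwards [eventually_ne_atTop J] with i hi
  simp [telescopingFactor, hi]

theorem prod_range_telescopingFactor :
    ∏ i ∈ range (J + 1), telescopingFactor J i = (-1) ^ J / 2 := by
  rw [prod_range_succ, ← prod_range_one_sub_natCast_div J, div_eq_mul_one_div]
  congr 1
  · exact prod_congr rfl fun i hi => if_neg (by simp at hi; omega)
  · simp [telescopingFactor]

theorem multipliable_mulIndicator_one_sub_sq_div_sq_s5 :
    Multipliable
      ({i | i ≠ J}.mulIndicator fun i : ℕ => 1 - ((J + 1 : ℕ) : ℂ) ^ 2 / ((i : ℂ) + 1) ^ 2) := by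
  have hsum : Summable fun i : ℕ => -((J + 1 : ℕ) : ℂ) ^ 2 / ((i : ℂ) + 1) ^ 2 := by
    simpa using (summable_pow_div_add (α := ℂ) (-((J + 1 : ℕ) : ℂ) ^ 2) 2 1 one_lt_two).of_norm
  convert Complex.multipliable_one_add_of_summable (hsum.indicator {i | i ≠ J}) using 1
  funext i
  by_cases hi : i = J <;> simp [hi, neg_div, sub_eq_add_neg]

theorem hasProd_one_sub_sq_div_sq_ne :
    HasProd (fun i : {i : ℕ // i ≠ J} => 1 - ((J + 1 : ℕ) : ℂ) ^ 2 / ((i : ℂ) + 1) ^ 2)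
      ((-1) ^ J / 2) := by
  refine hasProd_subtype_iff_mulIndicator (s := {i | i ≠ J})
    (f := fun i : ℕ => 1 - ((J + 1 : ℕ) : ℂ) ^ 2 / ((i : ℂ) + 1) ^ 2) |>.mpr ?_
  rw [(multipliable_mulIndicator_one_sub_sq_div_sq_s5 J).hasProd_iff_tendsto_nat,
    ← prod_range_telescopingFactor]
  exact tendsto_prod_range_of_mul_shift (telescopingFactor_ne_zero J)
    (mulIndicator_mul_telescopingFactor J) (tendsto_telescopingFactor J)

theorem hasProd_inv_one_sub_sq_div_sq_ne :
    HasProd (fun i : {i : ℕ // i ≠ J} => (1 - ((J + 1 : ℕ) : ℂ) ^ 2 / ((i : ℂ) + 1) ^ 2)⁻¹)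
      (2 * (-1) ^ J) := by
  rw [show (2 : ℂ) * (-1) ^ J = ((-1) ^ J / 2)⁻¹ by
    rw [inv_div, div_eq_mul_inv, ← inv_pow, inv_neg_one]]
  exact (hasProd_one_sub_sq_div_sq_ne J).inv₀ (by simp)

end RemovedProduct

theorem stmt5_general (n j : ℕ) (hj : 1 ≤ j) (γn : ℂ)
    (hne : (j : ℂ) ^ 2 ≠ (n : ℂ) ^ 2 + γn)
    (g : ℂ → ℂ) (hg0 : g 0 = 1)
    (hgval : ∀ w : ℂ, w ≠ 0 →
      g (w ^ 2) = Complex.sin ((Real.pi : ℂ) * w) / ((Real.pi : ℂ) * w))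
    (K : ℂ)
    (hK : K = ((n : ℂ) / (j : ℂ)) *
        (∏' k : {k : ℕ // 1 ≤ k ∧ k ≠ j}, (1 - ((n : ℂ) ^ 2 + γn) / ((k : ℕ) : ℂ) ^ 2)) *
        (∏' k : {k : ℕ // 1 ≤ k ∧ k ≠ j}, (1 - (j : ℂ) ^ 2 / ((k : ℕ) : ℂ) ^ 2)⁻¹)) :
    K = (-1 : ℂ) ^ (j + 1) *
        (2 * (n : ℂ) * (j : ℂ) / ((j : ℂ) ^ 2 - (n : ℂ) ^ 2 - γn)) *
        g ((n : ℂ) ^ 2 + γn) := by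
  obtain ⟨J, rfl⟩ : ∃ J, j = J + 1 := ⟨j - 1, by omega⟩
  obtain ⟨w, hw⟩ := IsAlgClosed.exists_pow_nat_eq ((n : ℂ) ^ 2 + γn) two_pos
  rw [← hw] at hK hne ⊢
  have hfactor : 1 - w ^ 2 / ((J : ℂ) + 1) ^ 2 ≠ 0 := by
    rw [sub_ne_zero, ne_comm, Ne, div_eq_one_iff_eq (pow_ne_zero 2 (Nat.cast_add_one_ne_zero J))]
    exact_mod_cast hne.symm
  have hsinc : HasProd (fun k : {k : ℕ // 1 ≤ k ∧ k ≠ J + 1} => 1 - w ^ 2 / ((k : ℕ) : ℂ) ^ 2)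
      (g (w ^ 2) / (1 - w ^ 2 / ((J : ℂ) + 1) ^ 2)) :=
    (hasProd_subtype_pos_ne_succ_iff (fun k : ℕ => 1 - w ^ 2 / (k : ℂ) ^ 2) J).mpr <| by
      simpa using (hasProd_one_sub_sq_div_sq g hg0 hgval w).subtype_ne_div hfactor
  have hsign : HasProd
      (fun k : {k : ℕ // 1 ≤ k ∧ k ≠ J + 1} => (1 - ((J + 1 : ℕ) : ℂ) ^ 2 / ((k : ℕ) : ℂ) ^ 2)⁻¹)
      (2 * (-1) ^ J) :=
    (hasProd_subtype_pos_ne_succ_iff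
      (fun k : ℕ => (1 - ((J + 1 : ℕ) : ℂ) ^ 2 / (k : ℂ) ^ 2)⁻¹) J).mpr <| by
      simpa using hasProd_inv_one_sub_sq_div_sq_ne J
  rw [hK, hsinc.tprod_eq, hsign.tprod_eq, sub_sub, ← hw]
  have hden : ((J : ℂ) + 1) ^ 2 - w ^ 2 ≠ 0 := sub_ne_zero.mpr (by exact_mod_cast hne)
  push_cast
  field_simp
  ring

/-- If `j² ≠ n² + γₙ`, then
`K(n,j) = (-1)^(j+1)·(2nj/(j² - n² - γₙ))·sinc(π√(n² + γₙ))`,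
where `K(n,j) = (n/j)·∏_{k≠j}(1 - (n² + γₙ)/k²)·∏_{k≠j}(1 - j²/k²)⁻¹`
(products over positive integers `k ≠ j`) and the entire function
`g` extends `w ↦ sinc(πw) = sin(πw)/(πw)` through `g(w²) = sinc(πw)`, `g(0) = 1`. -/
theorem stmt5 (n j : ℕ) (hn : 1 ≤ n) (hj : 1 ≤ j) (γn : ℂ)
    (hne : (j : ℂ) ^ 2 ≠ (n : ℂ) ^ 2 + γn)
    (g : ℂ → ℂ) (hg : Differentiable ℂ g) (hg0 : g 0 = 1)
    (hgval : ∀ w : ℂ, w ≠ 0 →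
      g (w ^ 2) = Complex.sin ((Real.pi : ℂ) * w) / ((Real.pi : ℂ) * w))
    (K : ℂ)
    (hK : K = ((n : ℂ) / (j : ℂ)) *
        (∏' k : {k : ℕ // 1 ≤ k ∧ k ≠ j}, (1 - ((n : ℂ) ^ 2 + γn) / ((k : ℕ) : ℂ) ^ 2)) *
        (∏' k : {k : ℕ // 1 ≤ k ∧ k ≠ j}, (1 - (j : ℂ) ^ 2 / ((k : ℕ) : ℂ) ^ 2)⁻¹)) :
    K = (-1 : ℂ) ^ (j + 1) *
        (2 * (n : ℂ) * (j : ℂ) / ((j : ℂ) ^ 2 - (n : ℂ) ^ 2 - γn)) *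
        g ((n : ℂ) ^ 2 + γn) :=
  stmt5_general n j hj γn hne g hg0 hgval K hK
end

section
/- The map from the odd subspace of ℓ²(ℤ) (real sequences (a_j)_{j∈ℤ} with a_{-j} = -a_j and ∑ a_j² < ∞) to ℓ²₁(ℕ) (sequences (b_n)_{n≥1} with ∑ n²b_n² < ∞) given by (a_j) ↦ (-μ_j^{-1/2} a_j)_{j≥1} is a bounded linear bijection (Banach space isomorphism), provided (μ_j)_{j≥1} is a sequence of positive reals with √μ_j = πj + O(1/j). -/
/-!
Restriction to `ℕ` identifies odd square-summable sequences on `ℤ` with square-summable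
sequences on `ℕ` vanishing at `0`, halving the squared norm. The asymptotics
`√μ_n = πn + O(1/n)` give `√μ_n / n → π`, so with positivity `√μ_n` is comparable to `n`
uniformly in `n ≥ 1`. Multiplication by `-μ_n^{-1/2}` is then an isomorphism of `ℓ²` onto
`ℓ²₁`, with inverse multiplication by `-√μ_n`.
-/

open Filter Topology

section OddSequence

variable {a : ℤ → ℝ}

lemma apply_zero_of_odd (ha : ∀ j, a (-j) = -a j) : a 0 = 0 :=
  self_eq_neg.mp (by simpa using ha 0)

lemma sign_mul_apply_natAbs_of_odd (ha : ∀ j, a (-j) = -a j) (j : ℤ) :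
    j.sign * a j.natAbs = a j := by
  obtain ⟨n, rfl | rfl⟩ := Int.eq_nat_or_neg j <;> rcases eq_or_ne n 0 with rfl | hn
  · simp [apply_zero_of_odd ha]
  · simp [Int.sign_natCast_of_ne_zero hn]
  · simp [apply_zero_of_odd ha]
  · simp [Int.sign_natCast_of_ne_zero hn, ha]

lemma tsum_int_sq_eq_two_mul_of_odd (ha : ∀ j, a (-j) = -a j)
    (hsum : Summable fun j => a j ^ 2) :
    ∑' j : ℤ, a j ^ 2 = 2 * ∑' n : ℕ, a n ^ 2 := calc
  ∑' j : ℤ, a j ^ 2 = ∑' j : ℤ, a j ^ 2 + a 0 ^ 2 := by simp [apply_zero_of_odd ha]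
  _ = ∑' n : ℕ, (a n ^ 2 + a (-n) ^ 2) := (tsum_nat_add_neg hsum).symm
  _ = 2 * ∑' n : ℕ, a n ^ 2 := by simp only [ha, neg_sq, ← two_mul, tsum_mul_left]

end OddSequence

lemma summable_sq_sign_mul_natAbs {b : ℕ → ℝ} (hb : Summable fun n => b n ^ 2) :
    Summable fun j : ℤ => (j.sign * b j.natAbs) ^ 2 := by
  refine .of_nonneg_of_le (fun _ => sq_nonneg _) (fun j => ?_)
    (.of_nat_of_neg (f := fun j : ℤ => b j.natAbs ^ 2) (by simpa using hb) (by simpa using hb))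
  rcases Int.sign_trichotomy j with h | h | h <;> simp [h, sq_nonneg]

def oddRestrictEquiv :
    {a : ℤ → ℝ // (∀ j, a (-j) = -a j) ∧ Summable fun j => a j ^ 2} ≃
      {b : ℕ → ℝ // b 0 = 0 ∧ Summable fun n => b n ^ 2} where
  toFun a := ⟨fun n => a.1 n, apply_zero_of_odd a.2.1, a.2.2.comp_injective Nat.cast_injective⟩
  invFun b := ⟨fun j => j.sign * b.1 j.natAbs, fun j => by simp, summable_sq_sign_mul_natAbs b.2.2⟩
  left_inv a := Subtype.ext (funext (sign_mul_apply_natAbs_of_odd a.2.1))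
  right_inv b := Subtype.ext <| funext fun n => by
    rcases eq_or_ne n 0 with rfl | hn
    · simp [b.2.1]
    · simp [Int.sign_natCast_of_ne_zero hn]

/-- `s 0` is left free, since all sequences that get multiplied by `s` vanish at `0`. -/
structure IsComparableToId (s : ℕ → ℝ) (K : ℝ) : Prop where
  pos : ∀ n, 1 ≤ n → 0 < s n
  natCast_le : ∀ n : ℕ, 1 ≤ n → (n : ℝ) ≤ K * s n
  le_natCast : ∀ n : ℕ, 1 ≤ n → s n ≤ K * n

namespace IsComparableToId

variable {s : ℕ → ℝ} {K : ℝ}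

lemma sq_mul_inv_le (h : IsComparableToId s K) (n : ℕ) (x : ℝ) :
    (n : ℝ) ^ 2 * ((s n)⁻¹ * x) ^ 2 ≤ K ^ 2 * x ^ 2 := by
  rcases n.eq_zero_or_pos with rfl | hn
  · simp only [Nat.cast_zero, zero_pow two_ne_zero, zero_mul]
    positivity
  have hs := h.pos n hn
  have hratio : n * (s n)⁻¹ ≤ K := by
    rw [← div_eq_mul_inv, div_le_iff₀ hs]
    exact h.natCast_le n hn
  calc (n : ℝ) ^ 2 * ((s n)⁻¹ * x) ^ 2 = (n * (s n)⁻¹) ^ 2 * x ^ 2 := by ring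
    _ ≤ K ^ 2 * x ^ 2 := by gcongr

lemma sq_mul_le (h : IsComparableToId s K) {c : ℕ → ℝ} (hc : c 0 = 0) (n : ℕ) :
    (s n * c n) ^ 2 ≤ K ^ 2 * ((n : ℝ) ^ 2 * c n ^ 2) := by
  rcases n.eq_zero_or_pos with rfl | hn
  · simp [hc]
  calc (s n * c n) ^ 2 = s n ^ 2 * c n ^ 2 := by ring
    _ ≤ (K * n) ^ 2 * c n ^ 2 := by gcongr; exacts [(h.pos n hn).le, h.le_natCast n hn]
    _ = K ^ 2 * ((n : ℝ) ^ 2 * c n ^ 2) := by ring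

lemma neg_mul_inv_mul_cancel (h : IsComparableToId s K) {b : ℕ → ℝ} (hb : b 0 = 0) (n : ℕ) :
    -s n * (-(s n)⁻¹ * b n) = b n := by
  rcases n.eq_zero_or_pos with rfl | hn
  · simp [hb]
  · field_simp [(h.pos n hn).ne']

lemma neg_inv_mul_neg_mul_cancel (h : IsComparableToId s K) {c : ℕ → ℝ} (hc : c 0 = 0)
    (n : ℕ) : -(s n)⁻¹ * (-s n * c n) = c n := by
  rcases n.eq_zero_or_pos with rfl | hn
  · simp [hc]
  · field_simp [(h.pos n hn).ne']

@[simps]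
noncomputable def scaleEquiv (h : IsComparableToId s K) :
    {b : ℕ → ℝ // b 0 = 0 ∧ Summable fun n => b n ^ 2} ≃
      {c : ℕ → ℝ // c 0 = 0 ∧ Summable fun n : ℕ => (n : ℝ) ^ 2 * c n ^ 2} where
  toFun b := ⟨fun n => -(s n)⁻¹ * b.1 n, by simp [b.2.1],
    .of_nonneg_of_le (fun _ => by positivity)
      (fun n => by simpa only [neg_mul, neg_sq] using h.sq_mul_inv_le n (b.1 n))
      (b.2.2.mul_left (K ^ 2))⟩
  invFun c := ⟨fun n => -s n * c.1 n, by simp [c.2.1],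
    .of_nonneg_of_le (fun _ => sq_nonneg _)
      (fun n => by simpa only [neg_mul, neg_sq] using h.sq_mul_le c.2.1 n)
      (c.2.2.mul_left (K ^ 2))⟩
  left_inv b := Subtype.ext <| funext <| h.neg_mul_inv_mul_cancel b.2.1
  right_inv c := Subtype.ext <| funext <| h.neg_inv_mul_neg_mul_cancel c.2.1

lemma tsum_scaleEquiv_le (h : IsComparableToId s K)
    (b : {b : ℕ → ℝ // b 0 = 0 ∧ Summable fun n => b n ^ 2}) :
    ∑' n : ℕ, (n : ℝ) ^ 2 * (h.scaleEquiv b).1 n ^ 2 ≤ K ^ 2 * ∑' n, b.1 n ^ 2 := by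
  rw [← tsum_mul_left]
  refine Summable.tsum_le_tsum (fun n => ?_) (h.scaleEquiv b).2.2 (b.2.2.mul_left _)
  simpa only [scaleEquiv_apply_coe, neg_mul, neg_sq] using h.sq_mul_inv_le n (b.1 n)

lemma tsum_le_tsum_scaleEquiv (h : IsComparableToId s K)
    (b : {b : ℕ → ℝ // b 0 = 0 ∧ Summable fun n => b n ^ 2}) :
    ∑' n, b.1 n ^ 2 ≤ K ^ 2 * ∑' n : ℕ, (n : ℝ) ^ 2 * (h.scaleEquiv b).1 n ^ 2 := by
  set c := h.scaleEquiv b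
  rw [← h.scaleEquiv.symm_apply_apply b, ← tsum_mul_left]
  refine Summable.tsum_le_tsum (fun n => ?_) (h.scaleEquiv.symm c).2.2 (c.2.2.mul_left _)
  simpa only [scaleEquiv_symm_apply_coe, neg_mul, neg_sq] using h.sq_mul_le c.2.1 n

end IsComparableToId

lemma tendsto_div_natCast_of_abs_sub_le {s : ℕ → ℝ} {L C : ℝ}
    (h : ∀ n : ℕ, 1 ≤ n → |s n - L * n| ≤ C / n) :
    Tendsto (fun n : ℕ => s n / n) atTop (𝓝 L) := by
  rw [tendsto_iff_norm_sub_tendsto_zero]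
  refine squeeze_zero' (.of_forall fun _ => norm_nonneg _) ?_
    ((tendsto_const_div_atTop_nhds_zero_nat C).div_atTop tendsto_natCast_atTop_atTop)
  filter_upwards [eventually_ge_atTop 1] with n hn
  have hn' : (0 : ℝ) < n := by exact_mod_cast hn
  have hsub : s n / n - L = (s n - L * n) / n := by field_simp
  rw [Real.norm_eq_abs, hsub, abs_div, Nat.abs_cast]
  gcongr
  exact h n hn

lemma exists_isComparableToId_of_tendsto_div {s : ℕ → ℝ} {L : ℝ} (hL : 0 < L)
    (hs : ∀ n, 1 ≤ n → 0 < s n) (h : Tendsto (fun n : ℕ => s n / n) atTop (𝓝 L)) :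
    ∃ K, 0 < K ∧ IsComparableToId s K := by
  obtain ⟨K₁, hK₁⟩ := h.bddAbove_range
  obtain ⟨K₂, hK₂⟩ := (h.inv₀ hL.ne').bddAbove_range
  set K := max 1 (max K₁ K₂)
  have hK₁K : K₁ ≤ K := le_max_of_le_right (le_max_left _ _)
  have hK₂K : K₂ ≤ K := le_max_of_le_right (le_max_right _ _)
  refine ⟨K, by positivity, hs, fun n hn => ?_, fun n hn => ?_⟩
  · have hratio : (s n / n)⁻¹ ≤ K₂ := hK₂ ⟨n, rfl⟩
    rw [inv_div, div_le_iff₀ (hs n hn)] at hratio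
    exact hratio.trans (by gcongr; exact (hs n hn).le)
  · have hratio : s n / n ≤ K₁ := hK₁ ⟨n, rfl⟩
    rw [div_le_iff₀ (by positivity)] at hratio
    exact hratio.trans (by gcongr)

/-- Let `(μ_j)_{j≥1}` be positive reals with `√μ_j = πj + O(1/j)`.  Then the map
`(a_j)_{j∈ℤ} ↦ (-μ_n^{-1/2} a_n)_{n≥1}` is a bounded linear bijection from the odd
subspace of `ℓ²(ℤ)` onto `ℓ²₁(ℕ)` (sequences indexed by `n ≥ 1` with `∑ n² b_n² < ∞`),
with two-sided norm bounds. -/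
theorem stmt6 (μ : ℕ → ℝ) (hμpos : ∀ j, 1 ≤ j → 0 < μ j)
    (hμasym : ∃ C : ℝ, ∀ j : ℕ, 1 ≤ j →
      |Real.sqrt (μ j) - Real.pi * j| ≤ C / j) :
    ∃ F : {a : ℤ → ℝ // (∀ j : ℤ, a (-j) = -a j) ∧ Summable (fun j : ℤ => a j ^ 2)} →
        {b : ℕ → ℝ // b 0 = 0 ∧ Summable (fun n : ℕ => (n : ℝ) ^ 2 * b n ^ 2)},
      (∀ a, ∀ n : ℕ, 1 ≤ n → (F a).val n = -(Real.sqrt (μ n))⁻¹ * a.val (n : ℤ)) ∧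
      Function.Bijective F ∧
      ∃ C : ℝ, 0 < C ∧ ∀ a,
        (∑' n : ℕ, (n : ℝ) ^ 2 * (F a).val n ^ 2) ≤ C * (∑' j : ℤ, a.val j ^ 2) ∧
        (∑' j : ℤ, a.val j ^ 2) ≤ C * (∑' n : ℕ, (n : ℝ) ^ 2 * (F a).val n ^ 2) := by
  obtain ⟨C, hC⟩ := hμasym
  obtain ⟨K, hK, hcomp⟩ := exists_isComparableToId_of_tendsto_div Real.pi_pos
    (fun n hn => Real.sqrt_pos.mpr (hμpos n hn)) (tendsto_div_natCast_of_abs_sub_le hC)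
  refine ⟨oddRestrictEquiv.trans hcomp.scaleEquiv, fun a n _ => rfl, Equiv.bijective _,
    2 * K ^ 2, by positivity, fun a => ?_⟩
  set b := oddRestrictEquiv a
  have hint : ∑' j : ℤ, a.1 j ^ 2 = 2 * ∑' n, b.1 n ^ 2 :=
    tsum_int_sq_eq_two_mul_of_odd a.2.1 a.2.2
  have hnonneg : 0 ≤ ∑' n, b.1 n ^ 2 := tsum_nonneg fun _ => sq_nonneg _
  have hup := hcomp.tsum_scaleEquiv_le b
  have hlow := hcomp.tsum_le_tsum_scaleEquiv b
  constructor <;> (simp only [Equiv.trans_apply]; nlinarith)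
end
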